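/- arXiv:2211.06803 — 3 statements merged into one kernel-verified Lean document; each statement's English description precedes it below -/
import Mathlib

section
/- Let n ≥ 1 and let A, B ∈ GL(n,ℤ) be matrices none of whose complex eigenvalues is a root of unity. Then every group homomorphism φ : ℤⁿ ⋊_A ℤ → ℤⁿ ⋊_B ℤ whose image has finite index in ℤⁿ ⋊_B ℤ is injective. -/
/-- The automorphism of the multiplicative version of `ℤⁿ` induced by a matrix
`A ∈ GL(n, ℤ)`. -/
noncomputable def glMulAut (n : ℕ) (A : Matrix.GeneralLinearGroup (Fin n) ℤ) :
    MulAut (Multiplicative (Fin n → ℤ)) :=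
  AddEquiv.toMultiplicative
    ((LinearMap.GeneralLinearGroup.generalLinearEquiv ℤ (Fin n → ℤ)
        (Matrix.GeneralLinearGroup.toLin A)).toAddEquiv)

/-- The semidirect product `ℤⁿ ⋊_A ℤ`, in which the generator `1 ∈ ℤ` acts on `ℤⁿ`
by the automorphism `A ∈ GL(n, ℤ)`. -/
noncomputable abbrev TorusSemidirectProduct (n : ℕ)
    (A : Matrix.GeneralLinearGroup (Fin n) ℤ) : Type :=
  Multiplicative (Fin n → ℤ) ⋊[zpowersHom _ (glMulAut n A)] Multiplicative ℤ

/-- `A ∈ GL(n, ℤ)` has no complex eigenvalue which is a root of unity: no complex root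
`z` of its characteristic polynomial satisfies `z ^ k = 1` for some integer `k ≥ 1`. -/
def NoRootOfUnityEigenvalue {n : ℕ} (A : Matrix.GeneralLinearGroup (Fin n) ℤ) : Prop :=
  ∀ z : ℂ, Polynomial.aeval z (Matrix.charpoly (A : Matrix (Fin n) (Fin n) ℤ)) = 0 →
    ∀ k : ℕ, 1 ≤ k → z ^ k ≠ 1

open Polynomial in
/-- If `A` has no root-of-unity complex eigenvalue, then in particular `1` is not an
eigenvalue, so `det (A - 1) ≠ 0`. -/
theorem TorusAux.det_sub_one_ne_zero {n : ℕ} (A : Matrix.GeneralLinearGroup (Fin n) ℤ)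
    (hA : NoRootOfUnityEigenvalue A) :
    ((A : Matrix (Fin n) (Fin n) ℤ) - 1).det ≠ 0 := by
  intro h
  set M : Matrix (Fin n) (Fin n) ℤ := (A : Matrix (Fin n) (Fin n) ℤ) with hM
  have heval : (M.charpoly).eval 1 = 0 := by
    have h2 := (evalRingHom (1:ℤ)).map_det M.charmatrix
    rw [coe_evalRingHom] at h2
    have h3 : (evalRingHom (1:ℤ)).mapMatrix M.charmatrix = 1 - M := by
      ext i j
      by_cases hij : i = j
      · subst hij
        simp [Matrix.charmatrix_apply_eq, Matrix.one_apply]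
      · simp [Matrix.charmatrix_apply_ne _ _ _ hij, Matrix.one_apply, hij]
    rw [Matrix.charpoly, h2, h3, (neg_sub M 1).symm, Matrix.det_neg, h, mul_zero]
  have hc : (Polynomial.aeval (1:ℂ)) M.charpoly = 0 := by
    rw [Polynomial.aeval_def, Polynomial.eval₂_at_one, heval, map_zero]
  exact hA 1 hc 1 le_rfl (one_pow 1)

open SemidirectProduct Multiplicative in
/-- If `A, B ∈ GL(n, ℤ)` (`n ≥ 1`) have no complex eigenvalues which are roots of unity,
then every homomorphism `φ : ℤⁿ ⋊_A ℤ → ℤⁿ ⋊_B ℤ` whose image has finite index is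
injective. -/
theorem injective_of_finiteIndex_range_torusSemidirectProduct (n : ℕ) (hn : 1 ≤ n)
    (A B : Matrix.GeneralLinearGroup (Fin n) ℤ)
    (hA : NoRootOfUnityEigenvalue A) (hB : NoRootOfUnityEigenvalue B)
    (φ : TorusSemidirectProduct n A →* TorusSemidirectProduct n B)
    (hφ : φ.range.FiniteIndex) :
    Function.Injective φ := by
  classical
  set M : Matrix (Fin n) (Fin n) ℤ := (A : Matrix (Fin n) (Fin n) ℤ) with hM
  have hdet : (M - 1).det ≠ 0 := TorusAux.det_sub_one_ne_zero A hA
  set ψ : TorusSemidirectProduct n A →* Multiplicative ℤ := rightHom.comp φ with hψ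
  set t : TorusSemidirectProduct n A := inr (ofAdd (1:ℤ)) with ht
  -- the action of the generator is given by `M`
  have hact : ∀ w : Fin n → ℤ,
      (zpowersHom _ (glMulAut n A)) (ofAdd (1:ℤ)) (ofAdd w) = ofAdd (M.mulVec w) := fun w => rfl
  -- zpow description of Multiplicative ℤ
  have hzpow : ∀ x : Multiplicative ℤ, x = (ofAdd (1:ℤ)) ^ (toAdd x) := by
    intro x
    apply Multiplicative.toAdd.injective
    simp
  -- Step 1 : ψ kills inl
  have hψA : ∀ w : Fin n → ℤ,
      ψ (inl (ofAdd (M.mulVec w))) = ψ (inl (ofAdd w)) := by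
    intro w
    have h1 := congrArg ψ
      (inl_aut (φ := zpowersHom _ (glMulAut n A)) (ofAdd (1:ℤ)) (ofAdd w))
    rw [hact w] at h1
    rw [h1]
    simp only [map_mul, map_inv]
    rw [mul_comm]
    exact inv_mul_cancel_left _ _
  have hψadd : ∀ v w : Fin n → ℤ,
      ψ (inl (ofAdd (v + w))) = ψ (inl (ofAdd v)) * ψ (inl (ofAdd w)) := by
    intro v w
    rw [ofAdd_add, map_mul, map_mul]
  have step1 : ∀ v : Fin n → ℤ, ψ (inl (ofAdd v)) = 1 := by
    intro v
    -- first : ψ (inl (ofAdd ((M-1).mulVec u))) = 1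
    have hsub : ∀ u : Fin n → ℤ, ψ (inl (ofAdd ((M - 1).mulVec u))) = 1 := by
      intro u
      have h1 : M.mulVec u = (M - 1).mulVec u + u := by
        rw [Matrix.sub_mulVec, Matrix.one_mulVec]
        ring
      have h2 := hψA u
      rw [h1, hψadd] at h2
      exact mul_right_cancel (h2.trans (one_mul _).symm)
    have h3 : (M - 1).mulVec ((M - 1).adjugate.mulVec v) = (M - 1).det • v := by
      rw [Matrix.mulVec_mulVec, Matrix.mul_adjugate, Matrix.smul_mulVec,
        Matrix.one_mulVec]
    have h4 := hsub ((M - 1).adjugate.mulVec v)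
    rw [h3] at h4
    -- ofAdd (d • v) = (ofAdd v) ^ d
    have h5 : (ofAdd ((M - 1).det • v)) = (ofAdd v) ^ ((M - 1).det) := by
      apply Multiplicative.toAdd.injective
      simp
    rw [h5, map_zpow] at h4
    have h6 : (M - 1).det • (toAdd (ψ (inl (ofAdd v)))) = 0 := by
      have h7 := congrArg Multiplicative.toAdd h4
      simpa using h7
    rcases smul_eq_zero.mp h6 with h | h
    · exact absurd h hdet
    · exact Multiplicative.toAdd.injective (by simpa using h)
  -- ψ of any element is determined by its right component
  have hψg : ∀ g : TorusSemidirectProduct n A,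
      ψ g = (ψ t) ^ (toAdd g.right) := by
    intro g
    conv_lhs => rw [← inl_left_mul_inr_right g]
    rw [map_mul]
    have h1 := step1 (toAdd g.left)
    rw [ofAdd_toAdd] at h1
    rw [h1, one_mul]
    conv_lhs => rw [hzpow g.right]
    rw [ht, map_zpow, map_zpow]
  -- the image of the generator has nontrivial right component
  have hs : toAdd (ψ t) ≠ 0 := by
    intro hs0
    have htriv : ∀ g, ψ g = 1 := by
      intro g
      rw [hψg g]
      have h1 : ψ t = 1 := Multiplicative.toAdd.injective (by simpa using hs0)
      rw [h1, one_zpow]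
    have hle : φ.range ≤ (rightHom : TorusSemidirectProduct n B →* Multiplicative ℤ).ker := by
      rintro b ⟨a, rfl⟩
      exact htriv a
    have hker : (rightHom : TorusSemidirectProduct n B →* Multiplicative ℤ).ker.index = 0 := by
      rw [Subgroup.index_ker]
      rw [MonoidHom.range_eq_top.2 rightHom_surjective]
      rw [Subgroup.card_top]
      exact Nat.card_eq_zero_of_infinite
    have hdvd := Subgroup.index_dvd_of_le hle
    rw [hker] at hdvd
    exact hφ.index_ne_zero (zero_dvd_iff.mp hdvd)
  -- elements mapping into the torus of the target have trivial right component
  have hright1 : ∀ g : TorusSemidirectProduct n A, (φ g).right = 1 → g.right = 1 := by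
    intro g hg
    have h1 : ψ g = 1 := hg
    rw [hψg g] at h1
    have h2 := congrArg Multiplicative.toAdd h1
    simp only [toAdd_zpow, toAdd_one] at h2
    have h3 : toAdd g.right = 0 := by
      rcases smul_eq_zero.mp h2 with h | h
      · exact h
      · exact absurd h hs
    exact Multiplicative.toAdd.injective (by simpa using h3)
  -- the induced endomorphism of ℤⁿ
  set F : (Fin n → ℤ) → (Fin n → ℤ) := fun v => toAdd ((φ (inl (ofAdd v))).left) with hF
  have hform : ∀ v : Fin n → ℤ, φ (inl (ofAdd v)) = inl (ofAdd (F v)) := by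
    intro v
    have h1 : (φ (inl (ofAdd v))).right = 1 := step1 v
    conv_lhs => rw [← inl_left_mul_inr_right (φ (inl (ofAdd v)))]
    rw [h1, map_one, mul_one, hF, ofAdd_toAdd]
  have hFadd : ∀ v w, F (v + w) = F v + F w := by
    intro v w
    have h1 : φ (inl (ofAdd (v + w))) = φ (inl (ofAdd v)) * φ (inl (ofAdd w)) := by
      rw [ofAdd_add, map_mul, map_mul]
    rw [hform, hform, hform, ← map_mul, ← ofAdd_add] at h1
    exact Multiplicative.ofAdd.injective (inl_injective h1)
  set Fhom : (Fin n → ℤ) →+ (Fin n → ℤ) := AddMonoidHom.mk' F hFadd with hFhom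
  set Mf : Matrix (Fin n) (Fin n) ℤ := LinearMap.toMatrix' (Fhom.toIntLinearMap) with hMf
  have hmulVec : ∀ v, Mf.mulVec v = F v := by
    intro v
    have h1 := Matrix.toLin'_toMatrix' (Fhom.toIntLinearMap)
    calc Mf.mulVec v = Matrix.toLin' Mf v := (Matrix.toLin'_apply _ _).symm
    _ = F v := by rw [hMf, h1]; rfl
  -- "finite-index surjectivity" of F
  have hsurj : ∀ u : Fin n → ℤ, ∃ (k : ℕ) (x : Fin n → ℤ), 0 < k ∧ F x = (k : ℤ) • u := by
    intro u
    obtain ⟨k, hk0, -, hk⟩ := Subgroup.exists_pow_mem_of_index_ne_zero hφ.index_ne_zero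
      (inl (ofAdd u))
    obtain ⟨g, hg⟩ := MonoidHom.mem_range.mp hk
    have hgr : g.right = 1 := by
      apply hright1
      have h1 : (φ g).right = rightHom (φ g) := rfl
      rw [h1, hg, map_pow]
      simp
    have hgeq : g = inl (ofAdd (toAdd g.left)) := by
      conv_lhs => rw [← inl_left_mul_inr_right g]
      rw [hgr, map_one, mul_one, ofAdd_toAdd]
    rw [hgeq, hform] at hg
    have h2 : (inl (ofAdd u) : TorusSemidirectProduct n B) ^ k = inl (ofAdd ((k : ℤ) • u)) := by
      rw [← map_pow]
      congr 1
    rw [h2] at hg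
    exact ⟨k, toAdd g.left, hk0, Multiplicative.ofAdd.injective (inl_injective hg)⟩
  choose k x hk hx using hsurj
  set W : Matrix (Fin n) (Fin n) ℤ := Matrix.of (fun i j => x (Pi.single j 1) i) with hW
  have hMW : Mf * W = Matrix.diagonal (fun j => (k (Pi.single j 1) : ℤ)) := by
    ext i j
    have h1 : (Mf * W) i j = (Mf.mulVec (x (Pi.single j 1))) i := by
      simp [Matrix.mul_apply, Matrix.mulVec, dotProduct, hW]
    rw [h1, hmulVec, hx]
    by_cases hij : i = j
    · subst hij
      simp [Matrix.diagonal_apply, Pi.single_apply]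
    · simp [Matrix.diagonal_apply, Pi.single_apply, hij]
  have hdetMf : Mf.det ≠ 0 := by
    intro h0
    have h1 := congrArg Matrix.det hMW
    rw [Matrix.det_mul, h0, zero_mul, Matrix.det_diagonal] at h1
    refine (Finset.prod_ne_zero_iff.mpr (fun j _ => ?_)) h1.symm
    exact Int.natCast_ne_zero.mpr (hk (Pi.single j 1)).ne'
  have hFinj : ∀ v, F v = 0 → v = 0 := by
    intro v hv
    have h2 : Mf.adjugate.mulVec (Mf.mulVec v) = Mf.det • v := by
      rw [Matrix.mulVec_mulVec, Matrix.adjugate_mul, Matrix.smul_mulVec,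
        Matrix.one_mulVec]
    rw [hmulVec, hv, Matrix.mulVec_zero] at h2
    rcases smul_eq_zero.mp h2.symm with h | h
    · exact absurd h hdetMf
    · exact h
  -- conclusion
  rw [injective_iff_map_eq_one]
  intro g hg
  have hgr : g.right = 1 := hright1 g (by rw [hg]; rfl)
  have hgeq : g = inl (ofAdd (toAdd g.left)) := by
    conv_lhs => rw [← inl_left_mul_inr_right g]
    rw [hgr, map_one, mul_one, ofAdd_toAdd]
  rw [hgeq] at hg ⊢
  rw [hform] at hg
  have h1 : F (toAdd g.left) = 0 := by
    have h2 := inl_injective (hg.trans (map_one (inl : _ →* TorusSemidirectProduct n B)).symm)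
    have h3 := congrArg Multiplicative.toAdd h2
    simpa using h3
  rw [hFinj _ h1]
  simp
end

section
/- Let n ≥ 1 and let A ∈ GL(n,ℤ) be a matrix none of whose complex eigenvalues is a root of unity. Then the semidirect product ℤⁿ ⋊_A ℤ is not presentable by products; that is, there do not exist infinite subgroups G₁, G₂ of ℤⁿ ⋊_A ℤ such that every element of G₁ commutes with every element of G₂ and the subgroup generated by G₁ and G₂ has finite index. -/
/-- A group `G` is presentable by products if there exist subgroups `G₁, G₂` of `G`
such that every element of `G₁` commutes with every element of `G₂`, both `G₁` and `G₂`
are infinite, and the subgroup generated by `G₁` and `G₂` has finite index in `G`. -/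
def PresentableByProducts (G : Type*) [Group G] : Prop :=
  ∃ G₁ G₂ : Subgroup G,
    (∀ g₁ ∈ G₁, ∀ g₂ ∈ G₂, Commute g₁ g₂) ∧
    (G₁ : Set G).Infinite ∧ (G₂ : Set G).Infinite ∧
    (G₁ ⊔ G₂).FiniteIndex

open Matrix Polynomial in
/-- A nonzero integer vector cannot be fixed by a positive power of a matrix with no
root-of-unity eigenvalues. -/
lemma TSP.no_fixed_vector {n : ℕ} (A : Matrix.GeneralLinearGroup (Fin n) ℤ)
    (hA : NoRootOfUnityEigenvalue A) (k : ℕ) (hk : 1 ≤ k) (v : Fin n → ℤ)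
    (hv : ((A : Matrix (Fin n) (Fin n) ℤ) ^ k).mulVec v = v) : v = 0 := by
  by_contra h0
  set M : Matrix (Fin n) (Fin n) ℤ := (A : Matrix (Fin n) (Fin n) ℤ) with hM
  set B : Matrix (Fin n) (Fin n) ℂ := M.map (Int.cast : ℤ → ℂ) with hB
  set w : Fin n → ℂ := fun i => (v i : ℂ) with hw
  have hwne : w ≠ 0 := by
    intro h
    apply h0
    funext i
    have := congrFun h i
    simpa [hw] using this
  have hBk : B ^ k = (M ^ k).map (Int.cast : ℤ → ℂ) := by
    have := map_pow ((Int.castRingHom ℂ).mapMatrix) M k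
    simpa [RingHom.mapMatrix_apply] using this.symm
  have hvw : (B ^ k).mulVec w = w := by
    funext i
    rw [hBk, hw]
    have := congrFun hv i
    simp only [Matrix.mulVec, dotProduct] at this ⊢
    simp only [Matrix.map_apply]
    exact_mod_cast this
  have h1 : (1 : ℂ) ∈ spectrum ℂ (B ^ k) := by
    rw [spectrum.mem_iff, Matrix.isUnit_iff_isUnit_det, isUnit_iff_ne_zero, not_not,
      ← Matrix.exists_mulVec_eq_zero_iff]
    refine ⟨w, hwne, ?_⟩
    rw [Matrix.sub_mulVec, hvw]
    simp
  rw [spectrum.map_pow_of_pos B (by omega)] at h1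
  obtain ⟨z, hz, hzk⟩ := h1
  refine hA z ?_ k hk hzk
  have hdet : det (Matrix.scalar (Fin n) z - B) = 0 := by
    rw [spectrum.mem_iff, Matrix.isUnit_iff_isUnit_det] at hz
    simpa [Matrix.scalar, Matrix.algebraMap_eq_diagonal] using (not_not.mp (fun hne => hz (isUnit_iff_ne_zero.mpr hne)))
  have hev : eval z B.charpoly = det (Matrix.scalar (Fin n) z - B) := by
    rw [Matrix.charpoly, eval_det, matPolyEquiv_charmatrix]
    simp
  have hcp : B.charpoly = (M.charpoly).map (Int.castRingHom ℂ) := by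
    rw [hB]
    exact Matrix.charpoly_map M (Int.castRingHom ℂ)
  rw [aeval_def, eval₂_eq_eval_map, algebraMap_int_eq, ← hcp, hev, hdet]

lemma TSP.glMulAut_pow_apply {n : ℕ} (A : Matrix.GeneralLinearGroup (Fin n) ℤ) (k : ℕ)
    (x : Multiplicative (Fin n → ℤ)) :
    Multiplicative.toAdd (((glMulAut n A) ^ k) x)
      = ((A : Matrix (Fin n) (Fin n) ℤ) ^ k).mulVec (Multiplicative.toAdd x) := by
  induction k with
  | zero => simp [Matrix.one_mulVec]
  | succ k ih =>
    rw [pow_succ', MulAut.mul_apply]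
    rw [show Multiplicative.toAdd ((glMulAut n A) (((glMulAut n A) ^ k) x))
        = (A : Matrix (Fin n) (Fin n) ℤ).mulVec (Multiplicative.toAdd (((glMulAut n A) ^ k) x))
        from rfl, ih, Matrix.mulVec_mulVec, ← pow_succ']

/-- A nontrivial element of `ℤⁿ` cannot be fixed by a nonzero power of the automorphism. -/
lemma TSP.zpow_fixed {n : ℕ} (A : Matrix.GeneralLinearGroup (Fin n) ℤ)
    (hA : NoRootOfUnityEigenvalue A) (t : ℤ) (ht : t ≠ 0)
    (x : Multiplicative (Fin n → ℤ)) (hx : ((glMulAut n A) ^ t) x = x) : x = 1 := by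
  have key : ∀ k : ℕ, 1 ≤ k → ((glMulAut n A) ^ (k : ℤ)) x = x → x = 1 := by
    intro k hk h
    rw [zpow_natCast] at h
    have h0 : Multiplicative.toAdd x = 0 := by
      apply TSP.no_fixed_vector A hA k hk
      rw [← TSP.glMulAut_pow_apply, h]
    have := congrArg Multiplicative.ofAdd h0
    simpa using this
  rcases lt_trichotomy t 0 with h | h | h
  · have hx' : ((glMulAut n A) ^ (-t)) x = x := by
      conv_lhs => rw [← hx]
      rw [← MulAut.mul_apply, ← zpow_add, neg_add_cancel, zpow_zero, MulAut.one_apply]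
    obtain ⟨k, hkt⟩ := Int.eq_ofNat_of_zero_le (by omega : (0:ℤ) ≤ -t)
    exact key k (by omega) (by rw [← hkt]; exact hx')
  · exact absurd h ht
  · obtain ⟨k, hkt⟩ := Int.eq_ofNat_of_zero_le h.le
    exact key k (by omega) (by rw [← hkt]; exact hx)

/-- If `x` lies in the kernel of the projection to `ℤ` and commutes with an element `g`
projecting nontrivially, then `x` is trivial. -/
lemma TSP.key {n : ℕ} (A : Matrix.GeneralLinearGroup (Fin n) ℤ)
    (hA : NoRootOfUnityEigenvalue A) (x g : TorusSemidirectProduct n A)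
    (hx : SemidirectProduct.rightHom x = 1) (hg : SemidirectProduct.rightHom g ≠ 1)
    (hc : Commute x g) : x = 1 := by
  rw [SemidirectProduct.rightHom_eq_right] at hx hg
  have h1 : (x * g).left = x.left * g.left := by
    rw [SemidirectProduct.mul_left, hx, map_one, MulAut.one_apply]
  have h2 : (g * x).left
      = g.left * ((glMulAut n A) ^ (Multiplicative.toAdd g.right)) x.left := by
    rw [SemidirectProduct.mul_left, zpowersHom_apply]
  have h3 : g.left * x.left
      = g.left * ((glMulAut n A) ^ (Multiplicative.toAdd g.right)) x.left := by
    rw [← h2, ← hc.eq, h1, mul_comm]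
  have h4 : ((glMulAut n A) ^ (Multiplicative.toAdd g.right)) x.left = x.left :=
    (mul_left_cancel h3).symm
  have ht : Multiplicative.toAdd g.right ≠ 0 := by
    intro h
    exact hg (by simpa using congrArg Multiplicative.ofAdd h)
  have h5 : x.left = 1 := TSP.zpow_fixed A hA _ ht _ h4
  cases x with
  | mk l r => simp only at h5 hx; rw [h5, hx]; rfl

open scoped commutatorElement

/-- If no complex eigenvalue of `A ∈ GL(n, ℤ)` (`n ≥ 1`) is a root of unity, then the
semidirect product `ℤⁿ ⋊_A ℤ` is not presentable by products. -/
theorem torusSemidirectProduct_not_presentableByProducts (n : ℕ) (hn : 1 ≤ n)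
    (A : Matrix.GeneralLinearGroup (Fin n) ℤ) (hA : NoRootOfUnityEigenvalue A) :
    ¬ PresentableByProducts (TorusSemidirectProduct n A) := by
  rintro ⟨G₁, G₂, hcomm, hinf₁, hinf₂, hfin⟩
  set G := TorusSemidirectProduct n A
  set Q : G →* Multiplicative ℤ := SemidirectProduct.rightHom with hQ
  by_cases h1 : ∀ g ∈ G₁, Q g = 1
  · by_cases h2 : ∀ g ∈ G₂, Q g = 1
    · -- both contained in the kernel, which has infinite index
      have hle : G₁ ⊔ G₂ ≤ Q.ker :=
        sup_le (fun g hg => h1 g hg) (fun g hg => h2 g hg)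
      have hker : Q.ker.index = 0 := by
        rw [Subgroup.index_ker]
        have : Q.range = ⊤ := MonoidHom.range_eq_top.mpr SemidirectProduct.rightHom_surjective
        rw [this]
        rw [Nat.card_congr Subgroup.topEquiv.toEquiv]
        exact Nat.card_eq_zero_of_infinite
      have : (G₁ ⊔ G₂).index = 0 := by
        have := Subgroup.index_dvd_of_le hle
        rw [hker] at this
        exact zero_dvd_iff.mp this
      exact hfin.index_ne_zero this
    · push_neg at h2
      obtain ⟨g₂, hg₂G, hg₂⟩ := h2
      refine hinf₁ (Set.Finite.subset (Set.finite_singleton 1) ?_)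
      intro x hx
      exact TSP.key A hA x g₂ (h1 x hx) hg₂ (hcomm x hx g₂ hg₂G)
  · push_neg at h1
    obtain ⟨g₁, hg₁G, hg₁⟩ := h1
    by_cases h2 : ∀ g ∈ G₂, Q g = 1
    · refine hinf₂ (Set.Finite.subset (Set.finite_singleton 1) ?_)
      intro x hx
      exact TSP.key A hA x g₁ (h2 x hx) hg₁ (hcomm g₁ hg₁G x hx).symm
    · push_neg at h2
      obtain ⟨g₂, hg₂G, hg₂⟩ := h2
      -- commutator trick : G₁ and G₂ are abelian
      have hab : ∀ (G' : Subgroup G) (g : G), Q g ≠ 1 →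
          (∀ a ∈ G', Commute a g) →
          ∀ x ∈ G', ∀ y ∈ G', Commute x y := by
        intro G' g hgQ hc x hx y hy
        have hmem : ⁅x, y⁆ ∈ G' := by
          rw [commutatorElement_def]
          exact mul_mem (mul_mem (mul_mem hx hy) (inv_mem hx)) (inv_mem hy)
        rw [← commutatorElement_eq_one_iff_commute]
        refine TSP.key A hA _ g ?_ hgQ ?_
        · show Q ⁅x, y⁆ = 1
          rw [map_commutatorElement]
          exact commutatorElement_eq_one_iff_commute.mpr (mul_comm _ _)
        · exact hc _ hmem
      have hab1 : ∀ x ∈ G₁, ∀ y ∈ G₁, Commute x y :=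
        hab G₁ g₂ hg₂ (fun a ha => hcomm a ha g₂ hg₂G)
      have hab2 : ∀ x ∈ G₂, ∀ y ∈ G₂, Commute x y :=
        hab G₂ g₁ hg₁ (fun a ha => (hcomm g₁ hg₁G a ha).symm)
      -- `G₁ ⊔ G₂` is abelian
      set s : Set G := (G₁ : Set G) ∪ (G₂ : Set G) with hs
      have hsup : G₁ ⊔ G₂ = Subgroup.closure s := by
        rw [hs, Subgroup.closure_union, Subgroup.closure_eq, Subgroup.closure_eq]
      have hcent : s ⊆ Subgroup.centralizer s := by
        rintro a (ha | ha) <;> rw [SetLike.mem_coe, Subgroup.mem_centralizer_iff] <;>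
          rintro b (hb | hb)
        · exact hab1 b hb a ha
        · exact (hcomm a ha b hb).symm
        · exact hcomm b hb a ha
        · exact hab2 b hb a ha
      have hHle : G₁ ⊔ G₂ ≤ Subgroup.centralizer s := by
        rw [hsup]
        exact (Subgroup.closure_le _).mpr hcent
      have hcommH : ∀ x ∈ G₁ ⊔ G₂, ∀ y ∈ G₁ ⊔ G₂, Commute x y := by
        intro x hx y hy
        have hy' : y ∈ Subgroup.centralizer s := hHle hy
        rw [hsup] at hx
        refine Subgroup.closure_induction ?_ ?_ ?_ ?_ hx
        · intro a ha
          exact Subgroup.mem_centralizer_iff.mp hy' a ha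
        · exact Commute.one_left y
        · intro a b _ _ h1 h2
          exact h1.mul_left h2
        · intro a _ h
          exact h.inv_left
      -- the kernel of `Q` is infinite
      haveI : Nonempty (Fin n) := ⟨⟨0, hn⟩⟩
      have hkerinf : (Q.ker : Set G).Infinite := by
        rw [hQ, ← SemidirectProduct.range_inl_eq_ker_rightHom, MonoidHom.coe_range]
        exact Set.infinite_range_of_injective SemidirectProduct.inl_injective
      haveI : Finite (G ⧸ (G₁ ⊔ G₂ : Subgroup G)) := by
        have h0 : Nat.card (G ⧸ (G₁ ⊔ G₂ : Subgroup G)) ≠ 0 := hfin.index_ne_zero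
        exact (Nat.card_ne_zero.mp h0).2
      haveI := hkerinf.to_subtype
      obtain ⟨x, y, hxy, hmk⟩ := Finite.exists_ne_map_eq_of_infinite
        (fun z : (Q.ker : Set G) => QuotientGroup.mk (s := G₁ ⊔ G₂) (z : G))
      have hzH : (x : G)⁻¹ * y ∈ G₁ ⊔ G₂ := QuotientGroup.eq.mp hmk
      have hzk : Q ((x : G)⁻¹ * (y : G)) = 1 := by
        have hx' : Q (x : G) = 1 := x.2
        have hy' : Q (y : G) = 1 := y.2
        rw [map_mul, map_inv, hx', hy', inv_one, one_mul]
      have hzne : (x : G)⁻¹ * y ≠ 1 := by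
        intro h
        exact hxy (Subtype.ext (inv_mul_eq_one.mp h))
      exact hzne (TSP.key A hA ((x : G)⁻¹ * y) g₁ hzk hg₁
        (hcommH _ hzH g₁ (Subgroup.mem_sup_left hg₁G)))
end

section
/- For integers k ≥ 1 and l, let Γ(k,l) be the group with presentation ⟨x, y, z, t | t x t⁻¹ = x, t y t⁻¹ = xᵏ y zˡ, t z t⁻¹ = z, [x,y] = z, x z = z x, y z = z y⟩. Then the center of Γ(k,l) is the subgroup generated by the image of z, and this subgroup is infinite cyclic. -/
/-- The relations of the presented group
`⟨x, y, z, t | t x t⁻¹ = x, t y t⁻¹ = xᵏ y zˡ, t z t⁻¹ = z, [x,y] = z, xz = zx, yz = zy⟩`,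
where the generators `x, y, z, t` are `0, 1, 2, 3 : Fin 4`. -/
def nilFourRels (k l : ℤ) : Set (FreeGroup (Fin 4)) :=
  let x := FreeGroup.of (0 : Fin 4)
  let y := FreeGroup.of (1 : Fin 4)
  let z := FreeGroup.of (2 : Fin 4)
  let t := FreeGroup.of (3 : Fin 4)
  {t * x * t⁻¹ * x⁻¹,
   t * y * t⁻¹ * (x ^ k * y * z ^ l)⁻¹,
   t * z * t⁻¹ * z⁻¹,
   x * y * x⁻¹ * y⁻¹ * z⁻¹,
   x * z * x⁻¹ * z⁻¹,
   y * z * y⁻¹ * z⁻¹}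

namespace NilFourAux

/-- `n*(n-1)/2`. -/
def hb (n : ℤ) : ℤ := n * (n - 1) / 2

lemma two_mul_hb (n : ℤ) : 2 * hb n = n * (n - 1) := by
  have h : (2:ℤ) ∣ n * (n - 1) := by
    have h1 : Even ((n - 1) * (n - 1 + 1)) := Int.even_mul_succ_self (n - 1)
    have h2 : (n - 1) * (n - 1 + 1) = n * (n - 1) := by ring
    rw [h2] at h1
    exact h1.two_dvd
  exact Int.mul_ediv_cancel' h

lemma hb_add (u v : ℤ) : hb (u + v) = hb u + hb v + u * v := by
  have h : 2 * hb (u + v) = 2 * (hb u + hb v + u * v) := by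
    rw [two_mul_hb, mul_add, mul_add, two_mul_hb, two_mul_hb]; ring
  exact mul_left_cancel₀ two_ne_zero h

lemma hb_zero : hb 0 = 0 := by norm_num [hb]
lemma hb_one : hb 1 = 0 := by norm_num [hb]
lemma hb_neg_one : hb (-1) = 1 := by norm_num [hb]

/-- The model group, with underlying set `ℤ⁴`; the quadruple `(a,b,c,d)`
stands for `x^a y^b z^c t^d` (with phantom parameters `k l`). -/
@[ext]
structure M (k l : ℤ) where
  a : ℤ
  b : ℤ
  c : ℤ
  d : ℤ

namespace M

variable {k l : ℤ}

instance : Mul (M k l) :=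
  ⟨fun p q => ⟨p.a + q.a + k * p.d * q.b, p.b + q.b,
    p.c + q.c + l * p.d * q.b - k * p.d * hb q.b - (q.a + k * p.d * q.b) * p.b,
    p.d + q.d⟩⟩

instance : One (M k l) := ⟨⟨0, 0, 0, 0⟩⟩

instance : Inv (M k l) :=
  ⟨fun p => ⟨-p.a + k * p.d * p.b, -p.b,
    -p.c + l * p.d * p.b - k * p.d * hb p.b - p.a * p.b + k * p.d * p.b * p.b, -p.d⟩⟩

lemma mul_def (p q : M k l) :
    p * q = ⟨p.a + q.a + k * p.d * q.b, p.b + q.b,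
      p.c + q.c + l * p.d * q.b - k * p.d * hb q.b - (q.a + k * p.d * q.b) * p.b,
      p.d + q.d⟩ := rfl

lemma one_def : (1 : M k l) = ⟨0, 0, 0, 0⟩ := rfl

lemma inv_def (p : M k l) :
    p⁻¹ = ⟨-p.a + k * p.d * p.b, -p.b,
      -p.c + l * p.d * p.b - k * p.d * hb p.b - p.a * p.b + k * p.d * p.b * p.b, -p.d⟩ := rfl

@[simp] lemma mul_a (p q : M k l) : (p * q).a = p.a + q.a + k * p.d * q.b := rfl
@[simp] lemma mul_b (p q : M k l) : (p * q).b = p.b + q.b := rfl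
@[simp] lemma mul_c (p q : M k l) :
    (p * q).c = p.c + q.c + l * p.d * q.b - k * p.d * hb q.b
      - (q.a + k * p.d * q.b) * p.b := rfl
@[simp] lemma mul_d (p q : M k l) : (p * q).d = p.d + q.d := rfl

instance : Group (M k l) where
  mul_assoc p q r := by
    ext <;> simp only [mul_a, mul_b, mul_c, mul_d, hb_add] <;> ring
  one_mul p := by
    ext <;> simp only [mul_a, mul_b, mul_c, mul_d, one_def, hb_zero] <;> ring
  mul_one p := by
    ext <;> simp only [mul_a, mul_b, mul_c, mul_d, one_def, hb_zero] <;> ring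
  inv_mul_cancel p := by
    ext <;> simp only [mul_a, mul_b, mul_c, mul_d, inv_def, one_def, hb_zero] <;> ring

def xg : M k l := ⟨1, 0, 0, 0⟩
def yg : M k l := ⟨0, 1, 0, 0⟩
def zg : M k l := ⟨0, 0, 1, 0⟩
def tg : M k l := ⟨0, 0, 0, 1⟩

lemma xg_zpow (n : ℤ) : (xg : M k l) ^ n = ⟨n, 0, 0, 0⟩ := by
  induction n using Int.induction_on with
  | zero => rfl
  | succ i ih =>
      rw [zpow_add_one, ih]
      ext <;> simp [mul_a, mul_b, mul_c, mul_d, xg, hb_zero]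
  | pred i ih =>
      rw [zpow_sub_one, ih]
      ext <;> simp [mul_a, mul_b, mul_c, mul_d, xg, inv_def, hb_zero] <;> omega

lemma zg_zpow (n : ℤ) : (zg : M k l) ^ n = ⟨0, 0, n, 0⟩ := by
  induction n using Int.induction_on with
  | zero => rfl
  | succ i ih =>
      rw [zpow_add_one, ih]
      ext <;> simp [mul_a, mul_b, mul_c, mul_d, zg, hb_zero]
  | pred i ih =>
      rw [zpow_sub_one, ih]
      ext <;> simp [mul_a, mul_b, mul_c, mul_d, zg, inv_def, hb_zero] <;> omega

end M

/-! ### Abstract consequences of the relations, in an arbitrary group. -/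

section Abstract

variable {G : Type*} [Group G] {k l : ℤ} {x y z t : G}

lemma zc (hz : ∀ g : G, z * g = g * z) (n : ℤ) (g : G) :
    z ^ n * g = g * z ^ n :=
  (Commute.zpow_left (hz g) n).eq

lemma txc (htx : t * x = x * t) (m n : ℤ) : t ^ m * x ^ n = x ^ n * t ^ m :=
  (Commute.zpow_zpow (htx : Commute t x) m n).eq

lemma e1 (hxy : x * y = y * x * z) : y * x = x * y * z⁻¹ := by
  rw [hxy]; group

lemma e2 (hz : ∀ g : G, z * g = g * z) (hxy : x * y = y * x * z) :
    y * x⁻¹ = x⁻¹ * y * z := by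
  refine mul_left_cancel (a := x) ?_
  calc x * (y * x⁻¹) = (x * y) * x⁻¹ := by group
    _ = (y * x * z) * x⁻¹ := by rw [hxy]
    _ = y * x * (z * x⁻¹) := by group
    _ = y * x * (x⁻¹ * z) := by rw [hz x⁻¹]
    _ = x * (x⁻¹ * y * z) := by group

lemma y_xa (hz : ∀ g : G, z * g = g * z) (hxy : x * y = y * x * z) (a : ℤ) :
    y * x ^ a = x ^ a * y * z ^ (-a) := by
  induction a using Int.induction_on with
  | zero => group
  | succ i ih =>
      calc y * x ^ ((i : ℤ) + 1) = y * x ^ (i : ℤ) * x := by group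
        _ = x ^ (i : ℤ) * y * z ^ (-(i : ℤ)) * x := by rw [ih]
        _ = x ^ (i : ℤ) * y * (z ^ (-(i : ℤ)) * x) := by group
        _ = x ^ (i : ℤ) * y * (x * z ^ (-(i : ℤ))) := by rw [zc hz (-(i : ℤ)) x]
        _ = x ^ (i : ℤ) * (y * x) * z ^ (-(i : ℤ)) := by group
        _ = x ^ (i : ℤ) * (x * y * z⁻¹) * z ^ (-(i : ℤ)) := by rw [e1 hxy]
        _ = x ^ ((i : ℤ) + 1) * y * z ^ (-((i : ℤ) + 1)) := by group
  | pred i ih =>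
      calc y * x ^ (-(i : ℤ) - 1) = y * x ^ (-(i : ℤ)) * x⁻¹ := by group
        _ = x ^ (-(i : ℤ)) * y * z ^ (-(-(i : ℤ))) * x⁻¹ := by rw [ih]
        _ = x ^ (-(i : ℤ)) * y * (z ^ (-(-(i : ℤ))) * x⁻¹) := by group
        _ = x ^ (-(i : ℤ)) * y * (x⁻¹ * z ^ (-(-(i : ℤ)))) := by
              rw [zc hz (-(-(i : ℤ))) x⁻¹]
        _ = x ^ (-(i : ℤ)) * (y * x⁻¹) * z ^ (-(-(i : ℤ))) := by group
        _ = x ^ (-(i : ℤ)) * (x⁻¹ * y * z) * z ^ (-(-(i : ℤ))) := by rw [e2 hz hxy]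
        _ = x ^ (-(i : ℤ) - 1) * y * z ^ (-(-(i : ℤ) - 1)) := by group

lemma yinv_xa (hz : ∀ g : G, z * g = g * z) (hxy : x * y = y * x * z) (a : ℤ) :
    y⁻¹ * x ^ a = x ^ a * y⁻¹ * z ^ a := by
  refine mul_left_cancel (a := y) ?_
  have h : y * (x ^ a * y⁻¹ * z ^ a) = x ^ a := by
    calc y * (x ^ a * y⁻¹ * z ^ a) = (y * x ^ a) * y⁻¹ * z ^ a := by group
      _ = (x ^ a * y * z ^ (-a)) * y⁻¹ * z ^ a := by rw [y_xa hz hxy a]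
      _ = x ^ a * y * (z ^ (-a) * y⁻¹) * z ^ a := by group
      _ = x ^ a * y * (y⁻¹ * z ^ (-a)) * z ^ a := by rw [zc hz (-a) y⁻¹]
      _ = x ^ a := by group
  rw [h]; group

lemma yb_xa (hz : ∀ g : G, z * g = g * z) (hxy : x * y = y * x * z) (a b : ℤ) :
    y ^ b * x ^ a = x ^ a * y ^ b * z ^ (-(a * b)) := by
  induction b using Int.induction_on with
  | zero => group
  | succ i ih =>
      calc y ^ ((i : ℤ) + 1) * x ^ a = y ^ (i : ℤ) * (y * x ^ a) := by group
        _ = y ^ (i : ℤ) * (x ^ a * y * z ^ (-a)) := by rw [y_xa hz hxy a]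
        _ = (y ^ (i : ℤ) * x ^ a) * y * z ^ (-a) := by group
        _ = (x ^ a * y ^ (i : ℤ) * z ^ (-(a * i))) * y * z ^ (-a) := by rw [ih]
        _ = x ^ a * y ^ (i : ℤ) * (z ^ (-(a * i)) * y) * z ^ (-a) := by group
        _ = x ^ a * y ^ (i : ℤ) * (y * z ^ (-(a * i))) * z ^ (-a) := by
              rw [zc hz (-(a * i)) y]
        _ = x ^ a * y ^ ((i : ℤ) + 1) * z ^ (-(a * ((i : ℤ) + 1))) := by group
  | pred i ih =>
      calc y ^ (-(i : ℤ) - 1) * x ^ a = y ^ (-(i : ℤ)) * (y⁻¹ * x ^ a) := by group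
        _ = y ^ (-(i : ℤ)) * (x ^ a * y⁻¹ * z ^ a) := by rw [yinv_xa hz hxy a]
        _ = (y ^ (-(i : ℤ)) * x ^ a) * y⁻¹ * z ^ a := by group
        _ = (x ^ a * y ^ (-(i : ℤ)) * z ^ (-(a * -(i : ℤ)))) * y⁻¹ * z ^ a := by rw [ih]
        _ = x ^ a * y ^ (-(i : ℤ)) * (z ^ (-(a * -(i : ℤ))) * y⁻¹) * z ^ a := by group
        _ = x ^ a * y ^ (-(i : ℤ)) * (y⁻¹ * z ^ (-(a * -(i : ℤ)))) * z ^ a := by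
              rw [zc hz (-(a * -(i : ℤ))) y⁻¹]
        _ = x ^ a * y ^ (-(i : ℤ) - 1) * z ^ (-(a * (-(i : ℤ) - 1))) := by group

lemma tinv_y (hz : ∀ g : G, z * g = g * z) (htx : t * x = x * t)
    (hty : t * y = x ^ k * y * z ^ l * t) :
    t⁻¹ * y = x ^ (-k) * y * z ^ (-l) * t⁻¹ := by
  refine mul_left_cancel (a := t) ?_
  have h : t * (x ^ (-k) * y * z ^ (-l) * t⁻¹) = y := by
    calc t * (x ^ (-k) * y * z ^ (-l) * t⁻¹)
        = (t ^ (1 : ℤ) * x ^ (-k)) * y * z ^ (-l) * t⁻¹ := by group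
      _ = (x ^ (-k) * t ^ (1 : ℤ)) * y * z ^ (-l) * t⁻¹ := by rw [txc htx 1 (-k)]
      _ = x ^ (-k) * ((t * y) * z ^ (-l)) * t⁻¹ := by group
      _ = x ^ (-k) * ((x ^ k * y * z ^ l * t) * z ^ (-l)) * t⁻¹ := by rw [hty]
      _ = x ^ (-k) * (x ^ k * y * z ^ l * (t * z ^ (-l))) * t⁻¹ := by group
      _ = x ^ (-k) * (x ^ k * y * z ^ l * (z ^ (-l) * t)) * t⁻¹ := by
            rw [← zc hz (-l) t]
      _ = y := by group
  rw [h]; group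

lemma td_y (hz : ∀ g : G, z * g = g * z) (htx : t * x = x * t)
    (hty : t * y = x ^ k * y * z ^ l * t) (d : ℤ) :
    t ^ d * y = x ^ (k * d) * y * z ^ (l * d) * t ^ d := by
  induction d using Int.induction_on with
  | zero => group
  | succ i ih =>
      calc t ^ ((i : ℤ) + 1) * y = t ^ (i : ℤ) * (t * y) := by group
        _ = t ^ (i : ℤ) * (x ^ k * y * z ^ l * t) := by rw [hty]
        _ = (t ^ (i : ℤ) * x ^ k) * y * z ^ l * t := by group
        _ = (x ^ k * t ^ (i : ℤ)) * y * z ^ l * t := by rw [txc htx (i : ℤ) k]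
        _ = x ^ k * (t ^ (i : ℤ) * y) * z ^ l * t := by group
        _ = x ^ k * (x ^ (k * i) * y * z ^ (l * i) * t ^ (i : ℤ)) * z ^ l * t := by rw [ih]
        _ = x ^ k * (x ^ (k * i) * y * z ^ (l * i) * (t ^ (i : ℤ) * z ^ l)) * t := by group
        _ = x ^ k * (x ^ (k * i) * y * z ^ (l * i) * (z ^ l * t ^ (i : ℤ))) * t := by
              rw [← zc hz l (t ^ (i : ℤ))]
        _ = x ^ (k * ((i : ℤ) + 1)) * y * z ^ (l * ((i : ℤ) + 1)) * t ^ ((i : ℤ) + 1) := by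
              group
  | pred i ih =>
      calc t ^ (-(i : ℤ) - 1) * y = t ^ (-(i : ℤ)) * (t⁻¹ * y) := by group
        _ = t ^ (-(i : ℤ)) * (x ^ (-k) * y * z ^ (-l) * t⁻¹) := by
              rw [tinv_y hz htx hty]
        _ = (t ^ (-(i : ℤ)) * x ^ (-k)) * y * z ^ (-l) * t⁻¹ := by group
        _ = (x ^ (-k) * t ^ (-(i : ℤ))) * y * z ^ (-l) * t⁻¹ := by
              rw [txc htx (-(i : ℤ)) (-k)]
        _ = x ^ (-k) * (t ^ (-(i : ℤ)) * y) * z ^ (-l) * t⁻¹ := by group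
        _ = x ^ (-k) * (x ^ (k * -(i : ℤ)) * y * z ^ (l * -(i : ℤ)) * t ^ (-(i : ℤ))) *
              z ^ (-l) * t⁻¹ := by rw [ih]
        _ = x ^ (-k) * (x ^ (k * -(i : ℤ)) * y * z ^ (l * -(i : ℤ)) *
              (t ^ (-(i : ℤ)) * z ^ (-l))) * t⁻¹ := by group
        _ = x ^ (-k) * (x ^ (k * -(i : ℤ)) * y * z ^ (l * -(i : ℤ)) *
              (z ^ (-l) * t ^ (-(i : ℤ)))) * t⁻¹ := by rw [← zc hz (-l) (t ^ (-(i : ℤ)))]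
        _ = x ^ (k * (-(i : ℤ) - 1)) * y * z ^ (l * (-(i : ℤ) - 1)) * t ^ (-(i : ℤ) - 1) := by
              group

lemma td_yinv (hz : ∀ g : G, z * g = g * z) (htx : t * x = x * t)
    (hty : t * y = x ^ k * y * z ^ l * t) (hxy : x * y = y * x * z) (d : ℤ) :
    t ^ d * y⁻¹ = x ^ (-(k * d)) * y⁻¹ * z ^ (-(l * d) - k * d) * t ^ d := by
  refine mul_right_cancel (b := y) ?_
  have h : (x ^ (-(k * d)) * y⁻¹ * z ^ (-(l * d) - k * d) * t ^ d) * y = t ^ d := by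
    calc (x ^ (-(k * d)) * y⁻¹ * z ^ (-(l * d) - k * d) * t ^ d) * y
        = x ^ (-(k * d)) * y⁻¹ * z ^ (-(l * d) - k * d) * (t ^ d * y) := by group
      _ = x ^ (-(k * d)) * y⁻¹ * z ^ (-(l * d) - k * d) *
            (x ^ (k * d) * y * z ^ (l * d) * t ^ d) := by rw [td_y hz htx hty d]
      _ = x ^ (-(k * d)) * y⁻¹ * (z ^ (-(l * d) - k * d) * x ^ (k * d)) * y *
            z ^ (l * d) * t ^ d := by group
      _ = x ^ (-(k * d)) * y⁻¹ * (x ^ (k * d) * z ^ (-(l * d) - k * d)) * y *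
            z ^ (l * d) * t ^ d := by rw [zc hz (-(l * d) - k * d) (x ^ (k * d))]
      _ = x ^ (-(k * d)) * (y⁻¹ * x ^ (k * d)) * (z ^ (-(l * d) - k * d) * y) *
            z ^ (l * d) * t ^ d := by group
      _ = x ^ (-(k * d)) * (y⁻¹ * x ^ (k * d)) * (y * z ^ (-(l * d) - k * d)) *
            z ^ (l * d) * t ^ d := by rw [zc hz (-(l * d) - k * d) y]
      _ = x ^ (-(k * d)) * (x ^ (k * d) * y⁻¹ * z ^ (k * d)) *
            (y * z ^ (-(l * d) - k * d)) * z ^ (l * d) * t ^ d := by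
            rw [yinv_xa hz hxy (k * d)]
      _ = y⁻¹ * (z ^ (k * d) * y) * z ^ (-(l * d) - k * d) * z ^ (l * d) * t ^ d := by
            group
      _ = y⁻¹ * (y * z ^ (k * d)) * z ^ (-(l * d) - k * d) * z ^ (l * d) * t ^ d := by
            rw [zc hz (k * d) y]
      _ = t ^ d := by group
  rw [h]; group

lemma td_yb (hz : ∀ g : G, z * g = g * z) (htx : t * x = x * t)
    (hty : t * y = x ^ k * y * z ^ l * t) (hxy : x * y = y * x * z) (d b : ℤ) :
    t ^ d * y ^ b = x ^ (k * d * b) * y ^ b * z ^ (l * d * b - k * d * hb b) * t ^ d := by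
  induction b using Int.induction_on with
  | zero =>
      rw [show l * d * 0 - k * d * hb 0 = 0 by rw [hb_zero]; ring,
          show k * d * 0 = 0 by ring]
      group
  | succ i ih =>
      have hbs : hb ((i : ℤ) + 1) = hb i + i := by rw [hb_add, hb_one]; ring
      calc t ^ d * y ^ ((i : ℤ) + 1) = (t ^ d * y ^ (i : ℤ)) * y := by group
        _ = (x ^ (k * d * i) * y ^ (i : ℤ) * z ^ (l * d * i - k * d * hb i) * t ^ d) * y := by
              rw [ih]
        _ = x ^ (k * d * i) * y ^ (i : ℤ) * z ^ (l * d * i - k * d * hb i) *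
              (t ^ d * y) := by group
        _ = x ^ (k * d * i) * y ^ (i : ℤ) * z ^ (l * d * i - k * d * hb i) *
              (x ^ (k * d) * y * z ^ (l * d) * t ^ d) := by rw [td_y hz htx hty d]
        _ = x ^ (k * d * i) * y ^ (i : ℤ) * (z ^ (l * d * i - k * d * hb i) * x ^ (k * d)) *
              y * z ^ (l * d) * t ^ d := by group
        _ = x ^ (k * d * i) * y ^ (i : ℤ) * (x ^ (k * d) * z ^ (l * d * i - k * d * hb i)) *
              y * z ^ (l * d) * t ^ d := by
              rw [zc hz (l * d * i - k * d * hb i) (x ^ (k * d))]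
        _ = x ^ (k * d * i) * (y ^ (i : ℤ) * x ^ (k * d)) *
              (z ^ (l * d * i - k * d * hb i) * y) * z ^ (l * d) * t ^ d := by group
        _ = x ^ (k * d * i) * (y ^ (i : ℤ) * x ^ (k * d)) *
              (y * z ^ (l * d * i - k * d * hb i)) * z ^ (l * d) * t ^ d := by
              rw [zc hz (l * d * i - k * d * hb i) y]
        _ = x ^ (k * d * i) * (x ^ (k * d) * y ^ (i : ℤ) * z ^ (-(k * d * i))) *
              (y * z ^ (l * d * i - k * d * hb i)) * z ^ (l * d) * t ^ d := by
              rw [yb_xa hz hxy (k * d) (i : ℤ)]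
        _ = x ^ (k * d * i) * x ^ (k * d) * y ^ (i : ℤ) * (z ^ (-(k * d * i)) * y) *
              z ^ (l * d * i - k * d * hb i) * z ^ (l * d) * t ^ d := by group
        _ = x ^ (k * d * i) * x ^ (k * d) * y ^ (i : ℤ) * (y * z ^ (-(k * d * i))) *
              z ^ (l * d * i - k * d * hb i) * z ^ (l * d) * t ^ d := by
              rw [zc hz (-(k * d * i)) y]
        _ = x ^ (k * d * ((i : ℤ) + 1)) * y ^ ((i : ℤ) + 1) *
              z ^ (l * d * ((i : ℤ) + 1) - k * d * hb ((i : ℤ) + 1)) * t ^ d := by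
              rw [hbs]; group
  | pred i ih =>
      have hbs : hb (-(i : ℤ) - 1) = hb (-(i : ℤ)) + i + 1 := by
        have := hb_add (-(i : ℤ)) (-1)
        rw [hb_neg_one] at this
        rw [show -(i : ℤ) - 1 = -(i : ℤ) + -1 by ring, this]; ring
      calc t ^ d * y ^ (-(i : ℤ) - 1) = (t ^ d * y ^ (-(i : ℤ))) * y⁻¹ := by group
        _ = (x ^ (k * d * -(i : ℤ)) * y ^ (-(i : ℤ)) *
              z ^ (l * d * -(i : ℤ) - k * d * hb (-(i : ℤ))) * t ^ d) * y⁻¹ := by rw [ih]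
        _ = x ^ (k * d * -(i : ℤ)) * y ^ (-(i : ℤ)) *
              z ^ (l * d * -(i : ℤ) - k * d * hb (-(i : ℤ))) * (t ^ d * y⁻¹) := by group
        _ = x ^ (k * d * -(i : ℤ)) * y ^ (-(i : ℤ)) *
              z ^ (l * d * -(i : ℤ) - k * d * hb (-(i : ℤ))) *
              (x ^ (-(k * d)) * y⁻¹ * z ^ (-(l * d) - k * d) * t ^ d) := by
              rw [td_yinv hz htx hty hxy d]
        _ = x ^ (k * d * -(i : ℤ)) * y ^ (-(i : ℤ)) *
              (z ^ (l * d * -(i : ℤ) - k * d * hb (-(i : ℤ))) * x ^ (-(k * d))) *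
              y⁻¹ * z ^ (-(l * d) - k * d) * t ^ d := by group
        _ = x ^ (k * d * -(i : ℤ)) * y ^ (-(i : ℤ)) *
              (x ^ (-(k * d)) * z ^ (l * d * -(i : ℤ) - k * d * hb (-(i : ℤ)))) *
              y⁻¹ * z ^ (-(l * d) - k * d) * t ^ d := by
              rw [zc hz (l * d * -(i : ℤ) - k * d * hb (-(i : ℤ))) (x ^ (-(k * d)))]
        _ = x ^ (k * d * -(i : ℤ)) * (y ^ (-(i : ℤ)) * x ^ (-(k * d))) *
              (z ^ (l * d * -(i : ℤ) - k * d * hb (-(i : ℤ))) * y⁻¹) *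
              z ^ (-(l * d) - k * d) * t ^ d := by group
        _ = x ^ (k * d * -(i : ℤ)) * (y ^ (-(i : ℤ)) * x ^ (-(k * d))) *
              (y⁻¹ * z ^ (l * d * -(i : ℤ) - k * d * hb (-(i : ℤ)))) *
              z ^ (-(l * d) - k * d) * t ^ d := by
              rw [zc hz (l * d * -(i : ℤ) - k * d * hb (-(i : ℤ))) y⁻¹]
        _ = x ^ (k * d * -(i : ℤ)) *
              (x ^ (-(k * d)) * y ^ (-(i : ℤ)) * z ^ (-(-(k * d) * -(i : ℤ)))) *
              (y⁻¹ * z ^ (l * d * -(i : ℤ) - k * d * hb (-(i : ℤ)))) *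
              z ^ (-(l * d) - k * d) * t ^ d := by
              rw [yb_xa hz hxy (-(k * d)) (-(i : ℤ))]
        _ = x ^ (k * d * -(i : ℤ)) * x ^ (-(k * d)) * y ^ (-(i : ℤ)) *
              (z ^ (-(-(k * d) * -(i : ℤ))) * y⁻¹) *
              z ^ (l * d * -(i : ℤ) - k * d * hb (-(i : ℤ))) *
              z ^ (-(l * d) - k * d) * t ^ d := by group
        _ = x ^ (k * d * -(i : ℤ)) * x ^ (-(k * d)) * y ^ (-(i : ℤ)) *
              (y⁻¹ * z ^ (-(-(k * d) * -(i : ℤ)))) *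
              z ^ (l * d * -(i : ℤ) - k * d * hb (-(i : ℤ))) *
              z ^ (-(l * d) - k * d) * t ^ d := by
              rw [zc hz (-(-(k * d) * -(i : ℤ))) y⁻¹]
        _ = x ^ (k * d * (-(i : ℤ) - 1)) * y ^ (-(i : ℤ) - 1) *
              z ^ (l * d * (-(i : ℤ) - 1) - k * d * hb (-(i : ℤ) - 1)) * t ^ d := by
              rw [hbs]; group

/-- The normal-form multiplication formula. -/
lemma keyP (hz : ∀ g : G, z * g = g * z) (htx : t * x = x * t)
    (hty : t * y = x ^ k * y * z ^ l * t) (hxy : x * y = y * x * z)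
    (a b c d a' b' c' d' : ℤ) :
    (x ^ a * y ^ b * z ^ c * t ^ d) * (x ^ a' * y ^ b' * z ^ c' * t ^ d') =
      x ^ (a + a' + k * d * b') * y ^ (b + b') *
        z ^ (c + c' + l * d * b' - k * d * hb b' - (a' + k * d * b') * b) *
        t ^ (d + d') := by
  calc (x ^ a * y ^ b * z ^ c * t ^ d) * (x ^ a' * y ^ b' * z ^ c' * t ^ d')
      = x ^ a * y ^ b * z ^ c * (t ^ d * x ^ a') * y ^ b' * z ^ c' * t ^ d' := by group
    _ = x ^ a * y ^ b * z ^ c * (x ^ a' * t ^ d) * y ^ b' * z ^ c' * t ^ d' := by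
          rw [txc htx d a']
    _ = x ^ a * y ^ b * z ^ c * x ^ a' * (t ^ d * y ^ b') * z ^ c' * t ^ d' := by group
    _ = x ^ a * y ^ b * z ^ c * x ^ a' *
          (x ^ (k * d * b') * y ^ b' * z ^ (l * d * b' - k * d * hb b') * t ^ d) *
          z ^ c' * t ^ d' := by rw [td_yb hz htx hty hxy d b']
    _ = x ^ a * y ^ b * (z ^ c * x ^ (a' + k * d * b')) * y ^ b' *
          z ^ (l * d * b' - k * d * hb b') * (t ^ d * z ^ c') * t ^ d' := by group
    _ = x ^ a * y ^ b * (x ^ (a' + k * d * b') * z ^ c) * y ^ b' *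
          z ^ (l * d * b' - k * d * hb b') * (t ^ d * z ^ c') * t ^ d' := by
          rw [zc hz c (x ^ (a' + k * d * b'))]
    _ = x ^ a * y ^ b * (x ^ (a' + k * d * b') * z ^ c) * y ^ b' *
          z ^ (l * d * b' - k * d * hb b') * (z ^ c' * t ^ d) * t ^ d' := by
          rw [← zc hz c' (t ^ d)]
    _ = x ^ a * (y ^ b * x ^ (a' + k * d * b')) * (z ^ c * y ^ b') *
          z ^ (l * d * b' - k * d * hb b') * z ^ c' * t ^ d * t ^ d' := by group
    _ = x ^ a * (y ^ b * x ^ (a' + k * d * b')) * (y ^ b' * z ^ c) *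
          z ^ (l * d * b' - k * d * hb b') * z ^ c' * t ^ d * t ^ d' := by
          rw [zc hz c (y ^ b')]
    _ = x ^ a * (x ^ (a' + k * d * b') * y ^ b * z ^ (-((a' + k * d * b') * b))) *
          (y ^ b' * z ^ c) * z ^ (l * d * b' - k * d * hb b') * z ^ c' * t ^ d *
          t ^ d' := by rw [yb_xa hz hxy (a' + k * d * b') b]
    _ = x ^ a * x ^ (a' + k * d * b') * y ^ b *
          (z ^ (-((a' + k * d * b') * b)) * y ^ b') * z ^ c *
          z ^ (l * d * b' - k * d * hb b') * z ^ c' * t ^ d * t ^ d' := by group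
    _ = x ^ a * x ^ (a' + k * d * b') * y ^ b *
          (y ^ b' * z ^ (-((a' + k * d * b') * b))) * z ^ c *
          z ^ (l * d * b' - k * d * hb b') * z ^ c' * t ^ d * t ^ d' := by
          rw [zc hz (-((a' + k * d * b') * b)) (y ^ b')]
    _ = x ^ (a + a' + k * d * b') * y ^ (b + b') *
          z ^ (c + c' + l * d * b' - k * d * hb b' - (a' + k * d * b') * b) *
          t ^ (d + d') := by group

end Abstract

/-! ### The presented group side -/

section Presented

variable (k l : ℤ)

/-- Images of the generators in the model group. -/
def gens : Fin 4 → M k l := fun i =>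
  if i = 0 then M.xg else if i = 1 then M.yg else if i = 2 then M.zg else M.tg

@[simp] lemma gens0 : gens k l 0 = M.xg := rfl
@[simp] lemma gens1 : gens k l 1 = M.yg := rfl
@[simp] lemma gens2 : gens k l 2 = M.zg := rfl
@[simp] lemma gens3 : gens k l 3 = M.tg := rfl

lemma lift_rels : ∀ r ∈ nilFourRels k l, FreeGroup.lift (gens k l) r = 1 := by
  intro r hr
  simp only [nilFourRels, Set.mem_insert_iff, Set.mem_singleton_iff] at hr
  rcases hr with h | h | h | h | h | h <;> subst h <;>
    simp only [map_mul, map_inv, map_zpow, FreeGroup.lift_apply_of, gens0, gens1, gens2, gens3,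
      M.xg_zpow, M.zg_zpow] <;>
    ext <;>
    simp [M.inv_def, M.one_def, M.xg, M.yg, M.zg, M.tg,
      hb_zero, hb_one, hb_neg_one] <;>
    ring

/-- The homomorphism from the presented group to the model group. -/
def Phi : PresentedGroup (nilFourRels k l) →* M k l :=
  PresentedGroup.toGroup (lift_rels k l)

@[simp] lemma Phi_of (i : Fin 4) : Phi k l (PresentedGroup.of i) = gens k l i :=
  PresentedGroup.toGroup.of (lift_rels k l)

lemma relP {r : FreeGroup (Fin 4)} (hr : r ∈ nilFourRels k l) :
    PresentedGroup.mk (nilFourRels k l) r = 1 :=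
  (QuotientGroup.eq_one_iff _).mpr (Subgroup.subset_normalClosure hr)

/-- notation shortcuts -/
local notation "X" => (PresentedGroup.of (0 : Fin 4) : PresentedGroup (nilFourRels k l))
local notation "Y" => (PresentedGroup.of (1 : Fin 4) : PresentedGroup (nilFourRels k l))
local notation "Z" => (PresentedGroup.of (2 : Fin 4) : PresentedGroup (nilFourRels k l))
local notation "T" => (PresentedGroup.of (3 : Fin 4) : PresentedGroup (nilFourRels k l))

lemma P_htx : T * X = X * T := by
  have h : T * X * T⁻¹ * X⁻¹ = 1 := by
    have := relP k l (r := FreeGroup.of 3 * FreeGroup.of 0 * (FreeGroup.of 3)⁻¹ *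
      (FreeGroup.of 0)⁻¹) (by simp [nilFourRels])
    simpa only [map_mul, map_inv, PresentedGroup.of] using this
  have h2 : T * X = (T * X * T⁻¹ * X⁻¹) * (X * T) := by group
  rw [h, one_mul] at h2
  exact h2

lemma P_hTZ : T * Z = Z * T := by
  have h : T * Z * T⁻¹ * Z⁻¹ = 1 := by
    have := relP k l (r := FreeGroup.of 3 * FreeGroup.of 2 * (FreeGroup.of 3)⁻¹ *
      (FreeGroup.of 2)⁻¹) (by simp [nilFourRels])
    simpa only [map_mul, map_inv, PresentedGroup.of] using this
  have h2 : T * Z = (T * Z * T⁻¹ * Z⁻¹) * (Z * T) := by group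
  rw [h, one_mul] at h2
  exact h2

lemma P_hXZ : X * Z = Z * X := by
  have h : X * Z * X⁻¹ * Z⁻¹ = 1 := by
    have := relP k l (r := FreeGroup.of 0 * FreeGroup.of 2 * (FreeGroup.of 0)⁻¹ *
      (FreeGroup.of 2)⁻¹) (by simp [nilFourRels])
    simpa only [map_mul, map_inv, PresentedGroup.of] using this
  have h2 : X * Z = (X * Z * X⁻¹ * Z⁻¹) * (Z * X) := by group
  rw [h, one_mul] at h2
  exact h2

lemma P_hYZ : Y * Z = Z * Y := by
  have h : Y * Z * Y⁻¹ * Z⁻¹ = 1 := by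
    have := relP k l (r := FreeGroup.of 1 * FreeGroup.of 2 * (FreeGroup.of 1)⁻¹ *
      (FreeGroup.of 2)⁻¹) (by simp [nilFourRels])
    simpa only [map_mul, map_inv, PresentedGroup.of] using this
  have h2 : Y * Z = (Y * Z * Y⁻¹ * Z⁻¹) * (Z * Y) := by group
  rw [h, one_mul] at h2
  exact h2

lemma P_hz : ∀ g : PresentedGroup (nilFourRels k l), Z * g = g * Z := by
  intro g
  have hg : g ∈ Subgroup.centralizer {(Z : PresentedGroup (nilFourRels k l))} := by
    refine PresentedGroup.generated_by _ _ (fun j => ?_) g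
    rw [Subgroup.mem_centralizer_iff]
    intro h hh
    rw [Set.mem_singleton_iff] at hh
    subst hh
    fin_cases j
    · exact (P_hXZ k l).symm
    · exact (P_hYZ k l).symm
    · rfl
    · exact (P_hTZ k l).symm
  exact Subgroup.mem_centralizer_iff.mp hg _ (Set.mem_singleton _)

lemma P_hty : T * Y = X ^ k * Y * Z ^ l * T := by
  have h : T * Y * T⁻¹ * (X ^ k * Y * Z ^ l)⁻¹ = 1 := by
    have := relP k l (r := FreeGroup.of 3 * FreeGroup.of 1 * (FreeGroup.of 3)⁻¹ *
      ((FreeGroup.of 0) ^ k * FreeGroup.of 1 * (FreeGroup.of 2) ^ l)⁻¹)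
      (by simp [nilFourRels])
    simpa only [map_mul, map_inv, map_zpow, PresentedGroup.of] using this
  have h2 : T * Y = (T * Y * T⁻¹ * (X ^ k * Y * Z ^ l)⁻¹) * ((X ^ k * Y * Z ^ l) * T) := by
    group
  rw [h, one_mul] at h2
  rw [h2]

lemma P_hxy : X * Y = Y * X * Z := by
  have h : X * Y * X⁻¹ * Y⁻¹ * Z⁻¹ = 1 := by
    have := relP k l (r := FreeGroup.of 0 * FreeGroup.of 1 * (FreeGroup.of 0)⁻¹ *
      (FreeGroup.of 1)⁻¹ * (FreeGroup.of 2)⁻¹) (by simp [nilFourRels])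
    simpa only [map_mul, map_inv, PresentedGroup.of] using this
  have h2 : X * Y = (X * Y * X⁻¹ * Y⁻¹ * Z⁻¹) * (Z * (Y * X)) := by group
  rw [h, one_mul] at h2
  rw [h2, P_hz k l (Y * X)]

/-- The homomorphism from the model group to the presented group. -/
def Psi : M k l →* PresentedGroup (nilFourRels k l) where
  toFun p := X ^ p.a * Y ^ p.b * Z ^ p.c * T ^ p.d
  map_one' := by
    show X ^ (0 : ℤ) * Y ^ (0 : ℤ) * Z ^ (0 : ℤ) * T ^ (0 : ℤ) = 1
    group
  map_mul' p q :=
    (keyP (P_hz k l) (P_htx k l) (P_hty k l) (P_hxy k l)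
      p.a p.b p.c p.d q.a q.b q.c q.d).symm

lemma Psi_apply (p : M k l) : Psi k l p = X ^ p.a * Y ^ p.b * Z ^ p.c * T ^ p.d := rfl

lemma Psi_zg : Psi k l M.zg = Z := by
  rw [Psi_apply]
  show X ^ (0 : ℤ) * Y ^ (0 : ℤ) * Z ^ (1 : ℤ) * T ^ (0 : ℤ) = Z
  group

lemma PsiPhi : (Psi k l).comp (Phi k l) = MonoidHom.id _ := by
  refine PresentedGroup.ext fun i => ?_
  rw [MonoidHom.comp_apply, MonoidHom.id_apply, Phi_of]
  fin_cases i
  · show Psi k l (gens k l 0) = PresentedGroup.of (0 : Fin 4)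
    rw [gens0, Psi_apply]
    show X ^ (1 : ℤ) * Y ^ (0 : ℤ) * Z ^ (0 : ℤ) * T ^ (0 : ℤ) = X
    group
  · show Psi k l (gens k l 1) = PresentedGroup.of (1 : Fin 4)
    rw [gens1, Psi_apply]
    show X ^ (0 : ℤ) * Y ^ (1 : ℤ) * Z ^ (0 : ℤ) * T ^ (0 : ℤ) = Y
    group
  · show Psi k l (gens k l 2) = PresentedGroup.of (2 : Fin 4)
    rw [gens2]
    exact Psi_zg k l
  · show Psi k l (gens k l 3) = PresentedGroup.of (3 : Fin 4)
    rw [gens3, Psi_apply]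
    show X ^ (0 : ℤ) * Y ^ (0 : ℤ) * Z ^ (0 : ℤ) * T ^ (1 : ℤ) = T
    group

end Presented

end NilFourAux

open NilFourAux in
/-- For integers `k ≥ 1` and `l`, the center of the group
`Γ(k,l) = ⟨x, y, z, t | t x t⁻¹ = x, t y t⁻¹ = xᵏ y zˡ, t z t⁻¹ = z, [x,y] = z,
x z = z x, y z = z y⟩` is the subgroup generated by (the image of) `z`, and this
subgroup is infinite cyclic. -/
theorem center_nilFourGroup_eq_zpowers_z (k l : ℤ) (hk : 1 ≤ k) :
    Subgroup.center (PresentedGroup (nilFourRels k l)) =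
      Subgroup.zpowers (PresentedGroup.of (2 : Fin 4)) ∧
    ((Subgroup.zpowers
        (PresentedGroup.of (rels := nilFourRels k l) (2 : Fin 4)) :
      Subgroup (PresentedGroup (nilFourRels k l))) : Set (PresentedGroup (nilFourRels k l))).Infinite := by
  have hZc : (PresentedGroup.of (2 : Fin 4) : PresentedGroup (nilFourRels k l)) ∈
      Subgroup.center (PresentedGroup (nilFourRels k l)) :=
    Subgroup.mem_center_iff.mpr fun g => (P_hz k l g).symm
  constructor
  · apply le_antisymm
    · intro g hg
      have hgid : (Psi k l) ((Phi k l) g) = g := DFunLike.congr_fun (PsiPhi k l) g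
      set p := (Phi k l) g with hp
      have hxe : M.xg * p = p * M.xg := by
        have h := Subgroup.mem_center_iff.mp hg (PresentedGroup.of (0 : Fin 4))
        have h2 := congrArg (Phi k l) h
        rw [map_mul, map_mul, Phi_of, gens0] at h2
        exact h2
      have hye : M.yg * p = p * M.yg := by
        have h := Subgroup.mem_center_iff.mp hg (PresentedGroup.of (1 : Fin 4))
        have h2 := congrArg (Phi k l) h
        rw [map_mul, map_mul, Phi_of, gens1] at h2
        exact h2
      have hb0 : p.b = 0 := by
        have h1 := congrArg M.c hxe
        simp [M.xg, hb_zero] at h1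
        omega
      have hd0 : p.d = 0 := by
        have h1 := congrArg M.a hye
        simp [M.yg] at h1
        have hk0 : k ≠ 0 := by omega
        rcases h1 with h | h
        · exact absurd h hk0
        · exact h
      have ha0 : p.a = 0 := by
        have h1 := congrArg M.c hye
        simp [M.yg, hb_one, hd0] at h1
        omega
      have hpz : p = M.zg ^ p.c := by
        rw [M.zg_zpow]
        ext
        · exact ha0
        · exact hb0
        · rfl
        · exact hd0
      refine Subgroup.mem_zpowers_iff.mpr ⟨p.c, ?_⟩
      calc (PresentedGroup.of (2 : Fin 4) : PresentedGroup (nilFourRels k l)) ^ p.c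
          = (Psi k l M.zg) ^ p.c := by rw [Psi_zg]
        _ = Psi k l (M.zg ^ p.c) := (map_zpow _ _ _).symm
        _ = Psi k l p := by rw [← hpz]
        _ = g := hgid
    · exact Subgroup.zpowers_le.mpr hZc
  · refine Set.infinite_of_injective_forall_mem
      (f := fun n : ℤ =>
        (PresentedGroup.of (2 : Fin 4) : PresentedGroup (nilFourRels k l)) ^ n) ?_ ?_
    · intro m n h
      have h2 := congrArg (Phi k l) h
      rw [map_zpow, map_zpow, Phi_of, gens2, M.zg_zpow, M.zg_zpow] at h2
      simpa using congrArg M.c h2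
    · intro n
      exact Subgroup.mem_zpowers_iff.mpr ⟨n, rfl⟩
end
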